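/- arXiv:1707.07513 — 7 statements merged into one kernel-verified Lean document; each statement's English description precedes it below -/
import Mathlib

section
/- If η : ℕ → ℝ is a nondecreasing positive doubling weight with doubling constant c, then the summing weight η̃(N) = ∑_{j=1}^N η(j)/j is doubling with constant at most 3c/2, i.e., η̃(2N) ≤ (3c/2)·η̃(N) for all N ≥ 1. -/
/-! Pair the terms `2n+1` and `2n+2` of `η̃ (2N)` with the term `n+1` of `η̃ N`: by monotonicity
and doubling both numerators are at most `c η (n+1)`, while
`1/(2n+1) + 1/(2n+2) ≤ 3/(2(n+1))`. -/

open Finset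

theorem Finset.sum_Icc_one_eq_sum_range {M : Type*} [AddCommMonoid M] (f : ℕ → M) (N : ℕ) :
    ∑ j ∈ Icc 1 N, f j = ∑ n ∈ range N, f (n + 1) := by
  induction N with
  | zero => simp
  | succ N ih => rw [sum_Icc_succ_top (by omega), ih, sum_range_succ]

theorem Finset.sum_Icc_one_two_mul_eq_sum_range_pairs {M : Type*} [AddCommMonoid M]
    (f : ℕ → M) (N : ℕ) :
    ∑ j ∈ Icc 1 (2 * N), f j = ∑ n ∈ range N, (f (2 * n + 1) + f (2 * n + 2)) := by
  induction N with
  | zero => simp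
  | succ N ih =>
    rw [show 2 * (N + 1) = 2 * N + 1 + 1 by ring, sum_Icc_succ_top (by omega),
      sum_Icc_succ_top (by omega), ih, sum_range_succ, add_assoc]

theorem div_add_div_le_three_halves_mul {a b d : ℝ} (n : ℕ) (hab : a ≤ b) (hbd : b ≤ d)
    (hd : 0 ≤ d) : a / (2 * n + 1) + b / (2 * n + 2) ≤ 3 / 2 * (d / (n + 1)) := by
  have hn : (0 : ℝ) < n + 1 := by positivity
  have ha : a / (2 * n + 1) ≤ d / (n + 1) :=
    div_le_div₀ hd (hab.trans hbd) hn (by linarith [n.cast_nonneg (α := ℝ)])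
  have hb : b / (2 * n + 2) ≤ d / (2 * (n + 1)) := by
    rw [show (2 * n + 2 : ℝ) = 2 * (n + 1) by ring]
    gcongr
  have hsplit : d / (n + 1) + d / (2 * (n + 1)) = 3 / 2 * (d / (n + 1)) := by
    field_simp; ring
  linarith

theorem weight_pair_le_of_doubling (η : ℕ → ℝ) (c : ℝ)
    (hpos : ∀ j, 1 ≤ j → 0 < η j)
    (hmono : ∀ j, 1 ≤ j → η j ≤ η (j + 1))
    (hdoub : ∀ j, 1 ≤ j → η (2 * j) ≤ c * η j) (n : ℕ) :
    η (2 * n + 1) / (2 * n + 1) + η (2 * n + 2) / (2 * n + 2)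
      ≤ 3 * c / 2 * (η (n + 1) / (n + 1)) := by
  have hdoub' : η (2 * n + 2) ≤ c * η (n + 1) := hdoub (n + 1) (by omega)
  have hcη : 0 ≤ c * η (n + 1) := (hpos (2 * n + 2) (by omega)).le.trans hdoub'
  calc η (2 * n + 1) / (2 * n + 1) + η (2 * n + 2) / (2 * n + 2)
      ≤ 3 / 2 * (c * η (n + 1) / (n + 1)) :=
        div_add_div_le_three_halves_mul n (hmono _ (by omega)) hdoub' hcη
    _ = 3 * c / 2 * (η (n + 1) / (n + 1)) := by ring

theorem stmt_1_general (η : ℕ → ℝ) (c : ℝ)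
    (hpos : ∀ j, 1 ≤ j → 0 < η j)
    (hmono : ∀ j, 1 ≤ j → η j ≤ η (j + 1))
    (hdoub : ∀ j, 1 ≤ j → η (2 * j) ≤ c * η j) :
    ∀ N, 1 ≤ N →
      ∑ j ∈ Finset.Icc 1 (2 * N), η j / j ≤ (3 * c / 2) * ∑ j ∈ Finset.Icc 1 N, η j / j := by
  intro N _
  rw [sum_Icc_one_two_mul_eq_sum_range_pairs, sum_Icc_one_eq_sum_range, mul_sum]
  gcongr with n
  push_cast
  exact weight_pair_le_of_doubling η c hpos hmono hdoub n

/-- Proposition 2.5, second part: If `η` is a nondecreasing positive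
doubling weight with doubling constant `c`, then the summing weight
`η̃ N = ∑_{j=1}^N η j / j` is doubling with constant at most `3c/2`. -/
theorem stmt_1 (η : ℕ → ℝ) (c : ℝ) (hc : 1 ≤ c)
    (hpos : ∀ j, 1 ≤ j → 0 < η j)
    (hmono : ∀ j, 1 ≤ j → η j ≤ η (j + 1))
    (hdoub : ∀ j, 1 ≤ j → η (2 * j) ≤ c * η j) :
    ∀ N, 1 ≤ N →
      ∑ j ∈ Finset.Icc 1 (2 * N), η j / j ≤ (3 * c / 2) * ∑ j ∈ Finset.Icc 1 N, η j / j :=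
  stmt_1_general η c hpos hmono hdoub
end

section
/- Let η : ℕ → ℝ be a positive nondecreasing weight. Then sup_N η̃(N)/η(N) < ∞ if and only if the lower dilation index i_η is strictly positive, where η̃(N) = ∑_{j=1}^N η(j)/j. -/
/-!
Write `η̃ = harmonicSum η`. Doubling the range of summation adds at least `η(m)/2`, so
`η̃(2ⁿk) ≥ (n/2)·η(k)`; if `η̃ ≤ C·η`, then `η(2ⁿk) ≥ 2·η(k)` as soon as `n > 4C`.
Conversely, if `λ·η(k) ≤ η(Mk)`, split `η̃(N)` at `k = N / M`: the tail is at most `M·η(N)` and,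
by induction, the head is at most `C·η(k) ≤ (C/λ)·η(N)`; the constant `C = Mλ/(λ - 1)` is the
fixed point of `C ↦ C/λ + M`.
-/

open Finset

noncomputable def harmonicSum (η : ℕ → ℝ) (N : ℕ) : ℝ := ∑ j ∈ Icc 1 N, η j / j

lemma harmonicSum_zero (η : ℕ → ℝ) : harmonicSum η 0 = 0 := by
  simp [harmonicSum]

lemma harmonicSum_add_sum_Ioc (η : ℕ → ℝ) {a b : ℕ} (hab : a ≤ b) :
    harmonicSum η a + ∑ j ∈ Ioc a b, η j / j = harmonicSum η b := by
  simp only [harmonicSum, show ∀ n, Icc 1 n = Ioc 0 n from Icc_add_one_left_eq_Ioc 0]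
  exact sum_Ioc_consecutive (fun j => η j / j) a.zero_le hab

section Monotone

variable {η : ℕ → ℝ} (hη : MonotoneOn η (Set.Ici 1))
include hη

lemma sum_Ioc_div_le (k : ℕ) {N : ℕ} (hN : 0 ≤ η N) :
    ∑ j ∈ Ioc k N, η j / j ≤ (N - k : ℕ) * η N / (k + 1) := by
  have hterm : ∀ j ∈ Ioc k N, η j / j ≤ η N / (k + 1) := by
    intro j hj
    obtain ⟨hkj, hjN⟩ := mem_Ioc.mp hj
    refine div_le_div₀ hN (hη (by simp; omega) (by simp; omega) hjN) (by positivity) ?_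
    exact_mod_cast hkj
  calc ∑ j ∈ Ioc k N, η j / j ≤ #(Ioc k N) • (η N / (k + 1)) := sum_le_card_nsmul _ _ _ hterm
    _ = (N - k : ℕ) * η N / (k + 1) := by rw [Nat.card_Ioc, nsmul_eq_mul, mul_div_assoc]

lemma sub_mul_div_le_sum_Ioc {a : ℕ} (ha : 1 ≤ a) (hηa : 0 ≤ η a) (b : ℕ) :
    (b - a : ℕ) * η a / b ≤ ∑ j ∈ Ioc a b, η j / j := by
  have hterm : ∀ j ∈ Ioc a b, η a / b ≤ η j / j := by
    intro j hj
    obtain ⟨haj, hjb⟩ := mem_Ioc.mp hj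
    have hmono : η a ≤ η j := hη (by simpa using ha) (by simp; omega) haj.le
    exact div_le_div₀ (hηa.trans hmono) hmono (by exact_mod_cast (by omega : 0 < j))
      (by exact_mod_cast hjb)
  calc (b - a : ℕ) * η a / b = #(Ioc a b) • (η a / b) := by
        rw [Nat.card_Ioc, nsmul_eq_mul, mul_div_assoc]
    _ ≤ ∑ j ∈ Ioc a b, η j / j := card_nsmul_le_sum _ _ _ hterm

lemma harmonicSum_add_half_le {m : ℕ} (hm : 1 ≤ m) (hηm : 0 ≤ η m) :
    harmonicSum η m + η m / 2 ≤ harmonicSum η (2 * m) := by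
  have hhalf : η m / 2 = (2 * m - m : ℕ) * η m / (2 * m : ℕ) := by
    rw [show 2 * m - m = m by omega]
    push_cast
    field_simp
  rw [← harmonicSum_add_sum_Ioc η (by omega : m ≤ 2 * m), hhalf]
  gcongr
  exact sub_mul_div_le_sum_Ioc hη hm hηm _

lemma half_mul_le_harmonicSum_two_pow_mul (hpos : ∀ j, 1 ≤ j → 0 ≤ η j) (n : ℕ) {k : ℕ}
    (hk : 1 ≤ k) : (n : ℝ) / 2 * η k ≤ harmonicSum η (2 ^ n * k) := by
  induction n with
  | zero =>
    simp only [Nat.cast_zero, zero_div, zero_mul]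
    exact sum_nonneg fun j hj => div_nonneg (hpos j (mem_Icc.mp hj).1) j.cast_nonneg
  | succ n ih =>
    have h2nk : 1 ≤ 2 ^ n * k := Nat.one_le_iff_ne_zero.mpr (by positivity)
    have hηk : η k ≤ η (2 ^ n * k) :=
      hη (by simpa using hk) (by simpa using h2nk) (Nat.le_mul_of_pos_left k (by positivity))
    have hdouble := harmonicSum_add_half_le hη h2nk (hpos _ h2nk)
    rw [← mul_assoc, ← pow_succ'] at hdouble
    push_cast
    linarith

lemma harmonicSum_le_harmonicSum_div_add {M : ℕ} (hM : 0 < M) {N : ℕ} (hN : 0 ≤ η N) :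
    harmonicSum η N ≤ harmonicSum η (N / M) + M * η N := by
  rw [← harmonicSum_add_sum_Ioc η (Nat.div_le_self N M)]
  gcongr
  calc ∑ j ∈ Ioc (N / M) N, η j / j ≤ (N - N / M : ℕ) * η N / (N / M + 1 : ℕ) := by
        exact_mod_cast sum_Ioc_div_le hη (N / M) hN
    _ ≤ M * η N := by
        rw [div_le_iff₀ (by positivity), mul_right_comm]
        gcongr
        exact_mod_cast (N.sub_le _).trans (Nat.lt_mul_div_succ N hM).le

lemma exists_dilation_of_harmonicSum_le (hpos : ∀ j, 1 ≤ j → 0 < η j) {C : ℝ}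
    (hC : ∀ N, 1 ≤ N → harmonicSum η N ≤ C * η N) :
    ∃ M : ℕ, 2 ≤ M ∧ ∃ lam : ℝ, 1 < lam ∧ ∀ k, 1 ≤ k → lam * η k ≤ η (M * k) := by
  have hC0 : 0 < C := by
    have h1 := hC 1 le_rfl
    simp only [harmonicSum, Icc_self, sum_singleton, Nat.cast_one, div_one] at h1
    nlinarith [hpos 1 le_rfl]
  obtain ⟨n, hn⟩ := exists_nat_gt (4 * C)
  have hn0 : n ≠ 0 := by rintro rfl; norm_num at hn; linarith
  refine ⟨2 ^ n, Nat.le_self_pow hn0 2, 2, one_lt_two, fun k hk => ?_⟩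
  have h2nk : 1 ≤ 2 ^ n * k := Nat.one_le_iff_ne_zero.mpr (by positivity)
  have hηk := hpos k hk
  refine le_of_mul_le_mul_left ?_ hC0
  calc C * (2 * η k) ≤ (n : ℝ) / 2 * η k := by nlinarith
    _ ≤ harmonicSum η (2 ^ n * k) :=
        half_mul_le_harmonicSum_two_pow_mul hη (fun j hj => (hpos j hj).le) n hk
    _ ≤ C * η (2 ^ n * k) := hC _ h2nk

lemma harmonicSum_le_of_dilation (hpos : ∀ j, 1 ≤ j → 0 ≤ η j) {M : ℕ} (hM : 2 ≤ M) {lam : ℝ}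
    (hlam : 1 < lam) (hphi : ∀ k, 1 ≤ k → lam * η k ≤ η (M * k)) :
    ∀ N, 1 ≤ N → harmonicSum η N ≤ M * lam / (lam - 1) * η N := by
  set C := M * lam / (lam - 1) with hCdef
  have hC0 : 0 ≤ C := div_nonneg (by positivity) (by linarith)
  have hCfix : C / lam + M = C := by
    rw [hCdef]
    field_simp [(by linarith : lam - 1 ≠ 0)]
    ring
  intro N
  induction N using Nat.strong_induction_on with
  | _ N ih =>
    intro hN
    have hhead : harmonicSum η (N / M) ≤ C / lam * η N := by
      rcases (N / M).eq_zero_or_pos with hk | hk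
      · rw [hk, harmonicSum_zero]
        exact mul_nonneg (div_nonneg hC0 (by linarith)) (hpos N hN)
      · have hdil : η (N / M) ≤ η N / lam := by
          rw [le_div_iff₀ (by linarith), mul_comm]
          exact (hphi _ hk).trans
            (hη (Set.mem_Ici.mpr (Nat.mul_pos (by omega) hk)) (by simpa using hN) (N.mul_div_le M))
        calc harmonicSum η (N / M) ≤ C * η (N / M) := ih _ (Nat.div_lt_self hN hM) hk
          _ ≤ C * (η N / lam) := by gcongr
          _ = C / lam * η N := by ring
    calc harmonicSum η N ≤ harmonicSum η (N / M) + M * η N :=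
          harmonicSum_le_harmonicSum_div_add hη (by omega) (hpos N hN)
      _ ≤ C / lam * η N + M * η N := by gcongr
      _ = C * η N := by rw [← add_mul, hCfix]

end Monotone

/-- Proposition 2.6: For a positive nondecreasing weight `η`,
`sup_N η̃(N)/η(N) < ∞` iff the lower dilation index `i_η` is strictly positive.
Here `sup_N η̃(N)/η(N) < ∞` is rendered as `∃ C, ∀ N ≥ 1, η̃ N ≤ C * η N`, and
`i_η > 0` (with `i_η = sup_{M>1} ln(φ_η M)/ln M`, `φ_η M = inf_{k≥1} η(Mk)/η(k)`)
is rendered by its equivalent form: there is an integer `M ≥ 2` with `φ_η M > 1`,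
i.e. some `λ > 1` with `λ·η k ≤ η (M·k)` for all `k ≥ 1`. -/
theorem stmt_2 (η : ℕ → ℝ)
    (hpos : ∀ j, 1 ≤ j → 0 < η j)
    (hmono : ∀ j, 1 ≤ j → η j ≤ η (j + 1)) :
    (∃ C : ℝ, ∀ N, 1 ≤ N → ∑ j ∈ Finset.Icc 1 N, η j / j ≤ C * η N)
      ↔ (∃ M : ℕ, 2 ≤ M ∧ ∃ lam : ℝ, 1 < lam ∧ ∀ k, 1 ≤ k → lam * η k ≤ η (M * k)) := by
  have hη : MonotoneOn η (Set.Ici 1) := monotoneOn_nat_Ici_of_le_succ hmono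
  constructor
  · rintro ⟨C, hC⟩
    exact exists_dilation_of_harmonicSum_le hη hpos hC
  · rintro ⟨M, hM, lam, hlam, hphi⟩
    exact ⟨_, harmonicSum_le_of_dilation hη (fun j hj => (hpos j hj).le) hM hlam hphi⟩
end

section
/- Let η : ℕ → ℝ be a positive nondecreasing weight. Then ∑_{j=1}^∞ s_j*·η(j)/j ≤ C·∑_{j=1}^∞ s_j*·Δη(j) for all nonincreasing nonnegative sequences (s_j*) and some constant C if and only if the lower dilation index i_η > 0, where Δη(j) = η(j) − η(j−1) with η(0) = 0. -/
/-!
With `η̂ n = ∑_{j ≤ n} η j / j`, summation by parts against a nonincreasing sequence reduces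
the embedding to the pointwise bound `η̂ ≤ K η`, and testing it on indicators of `[1, N]` shows
that this bound is also necessary. The bound gives a positive index: each dyadic block
contributes at least `η k / 2` to `η̂`, so `η k * r / 2 ≤ η̂ (2 ^ r k) ≤ C η (2 ^ r k)`, and
`M = 2 ^ r` with `r > 2 C` dilates `η` by `r / (2 C) > 1`. Conversely, if `λ η k ≤ η (M k)`,
splitting `η̂ n` at `n / M` gives `η̂ n ≤ (K / λ + M) η n`, which closes an induction for
`K = M λ / (λ - 1)`.
-/

open Finset

theorem sum_range_mul_eq_abel (t a : ℕ → ℝ) (n : ℕ) :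
    ∑ j ∈ range n, t j * a j
      = ∑ j ∈ range n, (t j - t (j + 1)) * ∑ i ∈ range (j + 1), a i
        + t n * ∑ i ∈ range n, a i := by
  induction n with
  | zero => simp
  | succ n ih =>
    rw [sum_range_succ, sum_range_succ, ih, sum_range_succ a]
    ring

theorem sum_range_mul_le_of_sum_range_le {t a b : ℕ → ℝ} {K : ℝ} (ht : Antitone t)
    (ht0 : 0 ≤ t) (hab : ∀ n, ∑ i ∈ range n, a i ≤ K * ∑ i ∈ range n, b i) (n : ℕ) :
    ∑ j ∈ range n, t j * a j ≤ K * ∑ j ∈ range n, t j * b j := by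
  calc ∑ j ∈ range n, t j * a j
      ≤ ∑ j ∈ range n, (t j - t (j + 1)) * (K * ∑ i ∈ range (j + 1), b i)
        + t n * (K * ∑ i ∈ range n, b i) := by
        rw [sum_range_mul_eq_abel]
        gcongr with j
        · exact sub_nonneg.mpr (ht j.le_succ)
        · exact hab _
        · exact ht0 n
        · exact hab n
    _ = K * ∑ j ∈ range n, t j * b j := by
        rw [sum_range_mul_eq_abel t b, mul_add]
        congr 1
        · rw [mul_sum]
          exact sum_congr rfl fun j _ => by ring
        · ring

theorem tsum_mul_le_of_sum_range_le {t a b : ℕ → ℝ} {K : ℝ} (ht : Antitone t) (ht0 : 0 ≤ t)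
    (ha : 0 ≤ a) (hb : 0 ≤ b) (hK : 0 ≤ K)
    (hab : ∀ n, ∑ i ∈ range n, a i ≤ K * ∑ i ∈ range n, b i)
    (hsum : Summable fun j => t j * b j) :
    ∑' j, t j * a j ≤ K * ∑' j, t j * b j := by
  refine Real.tsum_le_of_sum_range_le (fun j => mul_nonneg (ht0 j) (ha j)) fun n => ?_
  calc ∑ j ∈ range n, t j * a j ≤ K * ∑ j ∈ range n, t j * b j :=
        sum_range_mul_le_of_sum_range_le ht ht0 hab n
    _ ≤ K * ∑' j, t j * b j :=
        mul_le_mul_of_nonneg_left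
          (hsum.sum_le_tsum _ fun j _ => mul_nonneg (ht0 j) (hb j)) hK

/-- The paper's `η̂ (n) = ∑_{j=1}^n η(j) / j`, with the summation index shifted to start at `0`. -/
noncomputable def hatWeight (η : ℕ → ℝ) (n : ℕ) : ℝ := ∑ j ∈ range n, η (j + 1) / ((j : ℝ) + 1)

variable {η : ℕ → ℝ}

theorem hatWeight_nonneg (hnn : 0 ≤ η) (n : ℕ) : 0 ≤ hatWeight η n :=
  sum_nonneg fun j _ => div_nonneg (hnn _) (by positivity)

theorem hatWeight_sub_hatWeight (η : ℕ → ℝ) {m n : ℕ} (hmn : m ≤ n) :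
    hatWeight η n - hatWeight η m = ∑ j ∈ Ico m n, η (j + 1) / ((j : ℝ) + 1) :=
  (sum_Ico_eq_sub _ hmn).symm

theorem hatWeight_le_of_embedding (hη0 : η 0 = 0) {C : ℝ}
    (hC : ∀ s : ℕ → ℝ, (∀ j, 0 ≤ s j) → (∀ j, 1 ≤ j → s (j + 1) ≤ s j) →
        Summable (fun j : ℕ => s (j + 1) * (η (j + 1) - η j)) →
        ∑' j : ℕ, s (j + 1) * η (j + 1) / (j + 1)
          ≤ C * ∑' j : ℕ, s (j + 1) * (η (j + 1) - η j))
    (N : ℕ) : hatWeight η N ≤ C * η N := by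
  set s : ℕ → ℝ := fun j => if j ≤ N then 1 else 0
  have hs : ∀ f : ℕ → ℝ, ∑' j, s (j + 1) * f j = ∑ j ∈ range N, f j := by
    intro f
    rw [tsum_eq_sum (s := range N) fun j hj => by simp [s] at hj ⊢; omega]
    exact sum_congr rfl fun j hj => by simp [s] at hj ⊢; omega
  have h := hC s (fun j => by positivity)
    (fun j _ => by simp only [s]; split_ifs <;> first | omega | norm_num)
    (summable_of_ne_finset_zero (s := range N) fun j hj => by simp [s] at hj ⊢; omega)
  simp_rw [mul_div_assoc, hs, sum_range_sub, hη0, sub_zero] at h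
  exact h

theorem half_le_hatWeight_two_mul_sub (hη : Monotone η) (hnn : 0 ≤ η) {m : ℕ} (hm : 1 ≤ m) :
    η m / 2 ≤ hatWeight η (2 * m) - hatWeight η m := by
  rw [hatWeight_sub_hatWeight η (by omega)]
  calc η m / 2 = (Ico m (2 * m)).card • (η m / (2 * m)) := by
        rw [Nat.card_Ico, show 2 * m - m = m by omega, nsmul_eq_mul]
        field_simp
    _ ≤ _ := by
        refine card_nsmul_le_sum _ _ _ fun j hj => ?_
        rw [mem_Ico] at hj
        exact div_le_div₀ (hnn _) (hη (by omega)) (by positivity) (by exact_mod_cast hj.2)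

theorem mul_half_le_hatWeight_two_pow_mul_sub (hη : Monotone η) (hnn : 0 ≤ η) {k : ℕ}
    (hk : 1 ≤ k) (r : ℕ) :
    η k * (r / 2) ≤ hatWeight η (2 ^ r * k) - hatWeight η k := by
  induction r with
  | zero => simp
  | succ r ih =>
    have hkr : k ≤ 2 ^ r * k := Nat.le_mul_of_pos_left k (by positivity)
    have hblock := half_le_hatWeight_two_mul_sub hη hnn (hk.trans hkr)
    rw [← mul_assoc, ← pow_succ'] at hblock
    have := hη hkr
    push_cast
    linarith

theorem exists_dilation_of_hatWeight_le (hη : Monotone η) (hnn : 0 ≤ η) {C : ℝ}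
    (hC : ∀ n, hatWeight η n ≤ C * η n) :
    ∃ M : ℕ, 2 ≤ M ∧ ∃ lam : ℝ, 1 < lam ∧ ∀ k, 1 ≤ k → lam * η k ≤ η (M * k) := by
  set C' := max C 1
  have hC' : 0 < C' := lt_max_of_lt_right one_pos
  set r := ⌊2 * C'⌋₊ + 1
  have hr : 2 * C' < r := by simpa [r] using Nat.lt_floor_add_one (2 * C')
  refine ⟨2 ^ r, le_self_pow₀ (by norm_num) (by omega), r / (2 * C'), ?_, fun k hk => ?_⟩
  · rwa [one_lt_div (by positivity)]
  calc r / (2 * C') * η k = η k * (r / 2) / C' := by field_simp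
    _ ≤ η (2 ^ r * k) := by
      rw [div_le_iff₀ hC']
      calc η k * (r / 2) ≤ hatWeight η (2 ^ r * k) := by
            linarith [mul_half_le_hatWeight_two_pow_mul_sub hη hnn hk r, hatWeight_nonneg hnn k]
        _ ≤ C * η (2 ^ r * k) := hC _
        _ ≤ η (2 ^ r * k) * C' := by
            rw [mul_comm]
            exact mul_le_mul_of_nonneg_left (le_max_left _ _) (hnn _)

theorem hatWeight_sub_le (hη : Monotone η) (hnn : 0 ≤ η) {q n : ℕ} (hqn : q ≤ n) :
    hatWeight η n - hatWeight η q ≤ n / (q + 1) * η n := by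
  rw [hatWeight_sub_hatWeight η hqn]
  calc ∑ j ∈ Ico q n, η (j + 1) / ((j : ℝ) + 1) ≤ (Ico q n).card • (η n / (q + 1)) := by
        refine sum_le_card_nsmul _ _ _ fun j hj => ?_
        rw [mem_Ico] at hj
        exact div_le_div₀ (hnn _) (hη (by omega)) (by positivity) (by norm_cast; omega)
    _ ≤ n / (q + 1) * η n := by
        rw [Nat.card_Ico, nsmul_eq_mul, ← mul_div_right_comm, mul_div_assoc]
        gcongr
        · exact div_nonneg (hnn _) (by positivity)
        · exact_mod_cast Nat.sub_le n q

theorem hatWeight_le_of_dilation (hη : Monotone η) (hη0 : η 0 = 0) {M : ℕ} (hM : 2 ≤ M)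
    {lam : ℝ} (hlam : 1 < lam) (hdil : ∀ k, 1 ≤ k → lam * η k ≤ η (M * k)) :
    ∃ K, 0 ≤ K ∧ ∀ n, hatWeight η n ≤ K * η n := by
  have hnn : 0 ≤ η := fun n => hη0.ge.trans (hη n.zero_le)
  have hdil' : ∀ k, lam * η k ≤ η (M * k) := fun k => by
    rcases k.eq_zero_or_pos with rfl | hk
    · simp [hη0]
    · exact hdil k hk
  -- `K` is the fixed point of `K ↦ K / lam + M`
  set K : ℝ := M * lam / (lam - 1)
  have hK : 0 ≤ K := div_nonneg (by positivity) (by linarith)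
  have hKfix : K / lam + M = K := by
    have : lam - 1 ≠ 0 := (sub_pos.mpr hlam).ne'
    simp only [K]
    field_simp
    ring
  refine ⟨K, hK, fun n => ?_⟩
  induction n using Nat.strong_induction_on with
  | _ n ih =>
    rcases n.eq_zero_or_pos with rfl | hn
    · simp [hatWeight, hη0]
    set q := n / M
    have hqn : q < n := Nat.div_lt_self hn (by omega)
    have hhead : hatWeight η q ≤ K / lam * η n :=
      calc hatWeight η q ≤ K * η q := ih q hqn
        _ = K / lam * (lam * η q) := by field_simp
        _ ≤ K / lam * η n := by
          gcongr
          exact (hdil' q).trans (hη (by simpa [mul_comm] using Nat.div_mul_le_self n M))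
    have htail : hatWeight η n - hatWeight η q ≤ M * η n := by
      refine (hatWeight_sub_le hη hnn hqn.le).trans (mul_le_mul_of_nonneg_right ?_ (hnn n))
      rw [div_le_iff₀ (by positivity)]
      exact_mod_cast (Nat.lt_mul_div_succ n (by omega)).le
    calc hatWeight η n ≤ K / lam * η n + M * η n := by linarith
      _ = K * η n := by rw [← add_mul, hKfix]

/-- Corollary 2.8(ii): for a positive nondecreasing weight `η`
(with `η 0 = 0`), the embedding `ℓ¹_{η̂} ↪ ℓ¹_η`, i.e.
`∑_j s_j*·η j / j ≤ C·∑_j s_j*·Δη j` for all nonincreasing nonnegative sequences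
`(s_j*)` and some constant `C`, holds iff the lower dilation index `i_η > 0`
(rendered equivalently: some integer `M ≥ 2` has `φ_η M = inf_{k≥1} η(Mk)/η k > 1`). -/
theorem stmt_4 (η : ℕ → ℝ) (hη0 : η 0 = 0)
    (hpos : ∀ j, 1 ≤ j → 0 < η j)
    (hmono : ∀ j, 1 ≤ j → η j ≤ η (j + 1)) :
    (∃ C : ℝ, ∀ s : ℕ → ℝ, (∀ j, 0 ≤ s j) → (∀ j, 1 ≤ j → s (j + 1) ≤ s j) →
        Summable (fun j : ℕ => s (j + 1) * (η (j + 1) - η j)) →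
        ∑' j : ℕ, s (j + 1) * η (j + 1) / (j + 1)
          ≤ C * ∑' j : ℕ, s (j + 1) * (η (j + 1) - η j))
      ↔ (∃ M : ℕ, 2 ≤ M ∧ ∃ lam : ℝ, 1 < lam ∧ ∀ k, 1 ≤ k → lam * η k ≤ η (M * k)) := by
  have hη : Monotone η := monotone_nat_of_le_succ fun j => by
    rcases j.eq_zero_or_pos with rfl | hj
    · exact hη0.trans_le (hpos 1 le_rfl).le
    · exact hmono j hj
  have hnn : 0 ≤ η := fun n => hη0.ge.trans (hη n.zero_le)
  constructor
  · rintro ⟨C, hC⟩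
    exact exists_dilation_of_hatWeight_le hη hnn (hatWeight_le_of_embedding hη0 hC)
  · rintro ⟨M, hM, lam, hlam, hdil⟩
    obtain ⟨K, hK, hhat⟩ := hatWeight_le_of_dilation hη hη0 hM hlam hdil
    refine ⟨K, fun s hs0 hs hsum => ?_⟩
    simp_rw [mul_div_assoc]
    refine tsum_mul_le_of_sum_range_le (antitone_nat_of_succ_le fun j => hs (j + 1) (by omega))
      (fun j => hs0 _) (fun j => div_nonneg (hnn _) (by positivity))
      (fun j => sub_nonneg.mpr (hη j.le_succ)) hK (fun n => ?_) hsum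
    rw [sum_range_sub, hη0, sub_zero]
    exact hhat n
end

section
/- Let η : ℕ → ℝ be a positive nondecreasing weight. Then there exists c such that for every sequence s ∈ c₀, sup_N (η(N)/N)·∑_{j=1}^N s_j* ≤ c·sup_j η(j)·s_j* holds if and only if ∑_{j=1}^N 1/η(j) ≤ c·N/η(N) for all N ≥ 1, where (s_j*) denotes the nonincreasing rearrangement of (|s_n|). -/
/-!
For `⇐`, the bound `η j * s j ≤ B` gives `s j ≤ B / η j`, so
`∑_{j ≤ N} s j ≤ B ∑_{j ≤ N} 1 / η j`, and the hypothesis on `∑ 1 / η j` finishes.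
For `⇒`, test the embedding on `1 / η` truncated to `[1, N]`: it is nonincreasing because `η` is
nondecreasing, eventually zero, and satisfies `η j * s j ≤ 1`, while its first `N` partial sums
are exactly `∑_{j ≤ N} 1 / η j`.
-/

open Finset

lemma div_mul_le_iff_le_mul_div {a n S x : ℝ} (ha : 0 < a) (hn : 0 < n) :
    a / n * S ≤ x ↔ S ≤ x * n / a := by
  rw [div_mul_eq_mul_div, div_le_iff₀ hn, le_div_iff₀ ha, mul_comm a]

lemma sum_le_mul_sum_one_div {ι : Type*} (t : Finset ι) {η s : ι → ℝ} {B : ℝ}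
    (hpos : ∀ j ∈ t, 0 < η j) (hB : ∀ j ∈ t, η j * s j ≤ B) :
    ∑ j ∈ t, s j ≤ B * ∑ j ∈ t, 1 / η j := by
  rw [mul_sum]
  refine sum_le_sum fun j hj => ?_
  rw [mul_one_div, le_div_iff₀ (hpos j hj), mul_comm]
  exact hB j hj

section TruncatedReciprocal

variable {η : ℕ → ℝ} {N : ℕ}

noncomputable def truncatedReciprocal (η : ℕ → ℝ) (N : ℕ) : ℕ → ℝ :=
  Set.indicator (Set.Icc 1 N) fun j => 1 / η j

lemma truncatedReciprocal_nonneg (hpos : ∀ j, 1 ≤ j → 0 < η j) (j : ℕ) :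
    0 ≤ truncatedReciprocal η N j :=
  Set.indicator_nonneg (fun j hj => one_div_nonneg.2 (hpos j hj.1).le) j

lemma truncatedReciprocal_succ_le (hpos : ∀ j, 1 ≤ j → 0 < η j)
    (hmono : ∀ j, 1 ≤ j → η j ≤ η (j + 1)) {j : ℕ} (hj : 1 ≤ j) :
    truncatedReciprocal η N (j + 1) ≤ truncatedReciprocal η N j := by
  by_cases hjN : j + 1 ≤ N
  · simp only [truncatedReciprocal, Set.indicator_of_mem
      (show j + 1 ∈ Set.Icc 1 N from ⟨by omega, hjN⟩),
      Set.indicator_of_mem (show j ∈ Set.Icc 1 N from ⟨hj, by omega⟩)]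
    exact one_div_le_one_div_of_le (hpos j hj) (hmono j hj)
  · rw [truncatedReciprocal, Set.indicator_of_notMem (by simp only [Set.mem_Icc]; omega)]
    exact truncatedReciprocal_nonneg hpos j

lemma tendsto_truncatedReciprocal :
    Filter.Tendsto (truncatedReciprocal η N) Filter.atTop (nhds 0) :=
  tendsto_atTop_of_eventually_const (i₀ := N + 1) fun j hj =>
    Set.indicator_of_notMem (by simp only [Set.mem_Icc]; omega) _

lemma mul_truncatedReciprocal_le_one (hpos : ∀ j, 1 ≤ j → 0 < η j) {j : ℕ} (hj : 1 ≤ j) :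
    η j * truncatedReciprocal η N j ≤ 1 := by
  by_cases hjN : j ≤ N
  · rw [truncatedReciprocal, Set.indicator_of_mem (show j ∈ Set.Icc 1 N from ⟨hj, hjN⟩),
      mul_one_div_cancel (hpos j hj).ne']
  · rw [truncatedReciprocal, Set.indicator_of_notMem (by simp only [Set.mem_Icc]; omega),
      mul_zero]
    exact zero_le_one

lemma sum_truncatedReciprocal :
    ∑ j ∈ Icc 1 N, truncatedReciprocal η N j = ∑ j ∈ Icc 1 N, 1 / η j :=
  sum_congr rfl fun j hj => Set.indicator_of_mem (by simpa using hj) _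

end TruncatedReciprocal

/-- Lemma 2.11(ii): for a positive nondecreasing weight `η` and constant `c`,
the embedding `ℓ^∞_η ↪ m(η)` with norm `c` — i.e. for every `s ∈ c₀` (represented through its
nonincreasing rearrangement: `s` nonnegative, nonincreasing, tending to `0`),
`sup_N (η N / N)·∑_{j=1}^N s j ≤ c·sup_j η j·s j` (the sups rendered via upper bounds `B`) —
holds iff `∑_{j=1}^N 1/η j ≤ c·N/η N` for all `N ≥ 1`. -/
theorem stmt_5 (η : ℕ → ℝ)
    (hpos : ∀ j, 1 ≤ j → 0 < η j)
    (hmono : ∀ j, 1 ≤ j → η j ≤ η (j + 1)) (c : ℝ) :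
    (∀ s : ℕ → ℝ, (∀ j, 0 ≤ s j) → (∀ j, 1 ≤ j → s (j + 1) ≤ s j) →
        Filter.Tendsto s Filter.atTop (nhds 0) →
        ∀ B : ℝ, (∀ j, 1 ≤ j → η j * s j ≤ B) →
        ∀ N, 1 ≤ N → (η N / N) * ∑ j ∈ Finset.Icc 1 N, s j ≤ c * B)
      ↔ (∀ N, 1 ≤ N → ∑ j ∈ Finset.Icc 1 N, 1 / η j ≤ c * N / η N) := by
  have hNpos : ∀ N : ℕ, 1 ≤ N → (0 : ℝ) < N := fun N hN => by exact_mod_cast hN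
  constructor
  · intro H N hN
    have key := H (truncatedReciprocal η N) (truncatedReciprocal_nonneg hpos)
      (fun j => truncatedReciprocal_succ_le hpos hmono) tendsto_truncatedReciprocal 1
      (fun j => mul_truncatedReciprocal_le_one hpos) N hN
    rwa [sum_truncatedReciprocal, div_mul_le_iff_le_mul_div (hpos N hN) (hNpos N hN),
      mul_one] at key
  · intro H s hs _ _ B hB N hN
    have hB0 : 0 ≤ B := (mul_nonneg (hpos 1 le_rfl).le (hs 1)).trans (hB 1 le_rfl)
    rw [div_mul_le_iff_le_mul_div (hpos N hN) (hNpos N hN)]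
    calc ∑ j ∈ Icc 1 N, s j ≤ B * ∑ j ∈ Icc 1 N, 1 / η j :=
          sum_le_mul_sum_one_div _ (fun j hj => hpos j (mem_Icc.1 hj).1)
            fun j hj => hB j (mem_Icc.1 hj).1
      _ ≤ B * (c * N / η N) := mul_le_mul_of_nonneg_left (H N hN) hB0
      _ = c * B * N / η N := by ring
end

section
/- For sequences a = (a_j) and b = (b_j) in c₀ with nonincreasing rearrangements (a_j*), (b_j*), and a positive nondecreasing weight η: if sup_N (1/η(N))∑_{j=1}^N b_j* ≤ B, then ∑_{j=1}^∞ a_j*·b_j* ≤ B·∑_{j=1}^∞ a_j*·(η(j) − η(j−1)), where η(0) = 0. -/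
/-!
Summation by parts writes `∑_{j ≤ N} a_j b_j` through the partial sums `S_n = ∑_{j ≤ n} b_j`
with the nonnegative weights `a_n - a_{n+1}` and `a_N`. Replacing each `S_n` by its bound
`B η(n)` and summing back by parts gives `B ∑_{j ≤ N} a_j (η(j) - η(j-1))` for every `N`;
the inequality passes to the limit because the right-hand side is summable.
-/

open Finset

theorem sum_Icc_one_eq_sum_range_succ {M : Type*} [AddCommMonoid M] (f : ℕ → M) (n : ℕ) :
    ∑ j ∈ Icc 1 n, f j = ∑ i ∈ range n, f (i + 1) := by
  rw [range_eq_Ico, sum_Ico_add' f, zero_add, Ico_add_one_right_eq_Icc]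

theorem sum_range_mul_le_of_sum_range_le_s8 {a b c : ℕ → ℝ} (ha : Antitone a) (ha0 : ∀ i, 0 ≤ a i)
    (hc0 : c 0 = 0) (hbc : ∀ n, ∑ i ∈ range n, b i ≤ c n) (n : ℕ) :
    ∑ i ∈ range n, a i * b i ≤ ∑ i ∈ range n, a i * (c (i + 1) - c i) := by
  have hc : ∀ n, ∑ i ∈ range n, (c (i + 1) - c i) = c n := fun n => by
    rw [sum_range_sub, hc0, sub_zero]
  simp only [← smul_eq_mul]
  rw [sum_range_by_parts a b, sum_range_by_parts a (fun i => c (i + 1) - c i)]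
  simp only [hc, smul_eq_mul]
  refine sub_le_sub (mul_le_mul_of_nonneg_left (hbc n) (ha0 _)) (sum_le_sum fun i _ => ?_)
  exact mul_le_mul_of_nonpos_left (hbc _) (sub_nonpos.2 (ha (Nat.le_succ i)))

theorem tsum_le_tsum_of_sum_range_le {f g : ℕ → ℝ} (hf : ∀ i, 0 ≤ f i) (hg : Summable g)
    (hfg : ∀ n, ∑ i ∈ range n, f i ≤ ∑ i ∈ range n, g i) : ∑' i, f i ≤ ∑' i, g i := by
  refine Real.tsum_le_of_sum_range_le hf fun n => ge_of_tendsto hg.hasSum.tendsto_sum_nat ?_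
  filter_upwards [Filter.eventually_ge_atTop n] with m hm
  exact (sum_le_sum_of_subset_of_nonneg (range_mono hm) fun i _ _ => hf i).trans (hfg m)

theorem stmt_8_general (η : ℕ → ℝ) (hη0 : η 0 = 0)
    (hpos : ∀ j, 1 ≤ j → 0 < η j)
    (a b : ℕ → ℝ) (ha0 : ∀ j, 0 ≤ a j) (hb0 : ∀ j, 0 ≤ b j)
    (ham : ∀ j, 1 ≤ j → a (j + 1) ≤ a j)
    (hsum : Summable (fun j : ℕ => a (j + 1) * (η (j + 1) - η j)))
    (B : ℝ) (hB : ∀ N, 1 ≤ N → (1 / η N) * ∑ j ∈ Finset.Icc 1 N, b j ≤ B) :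
    ∑' j : ℕ, a (j + 1) * b (j + 1) ≤ B * ∑' j : ℕ, a (j + 1) * (η (j + 1) - η j) := by
  have hanti : Antitone fun i => a (i + 1) :=
    antitone_nat_of_succ_le fun i => ham (i + 1) (Nat.le_add_left 1 i)
  have hpartial : ∀ N, ∑ i ∈ range N, b (i + 1) ≤ B * η N := by
    rintro (_ | N)
    · simp [hη0]
    · have hηN := hpos (N + 1) (Nat.le_add_left 1 N)
      rw [← sum_Icc_one_eq_sum_range_succ, ← div_le_iff₀ hηN, div_eq_inv_mul, ← one_div]
      exact hB _ (Nat.le_add_left 1 N)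
  rw [← tsum_mul_left]
  refine tsum_le_tsum_of_sum_range_le (fun j => mul_nonneg (ha0 _) (hb0 _)) (hsum.mul_left B)
    fun n => ?_
  simpa only [← mul_sub, mul_left_comm _ B, ← mul_sum] using
    sum_range_mul_le_of_sum_range_le_s8 hanti (fun _ => ha0 _) (by simp [hη0]) hpartial n

/-- the Abel-summation inequality \eqref{dualab}: for nonincreasing
nonnegative sequences `a = (a_j*)`, `b = (b_j*)` in `c₀` and a positive nondecreasing
weight `η` with `η 0 = 0`: if `sup_N (1/η N)·∑_{j=1}^N b j ≤ B`, then
`∑_{j=1}^∞ a j·b j ≤ B·∑_{j=1}^∞ a j·(η j − η (j−1))` (the right-hand side being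
a member of `ℓ¹_{η̂}`, i.e. summable). -/
theorem stmt_8 (η : ℕ → ℝ) (hη0 : η 0 = 0)
    (hpos : ∀ j, 1 ≤ j → 0 < η j)
    (hmono : ∀ j, 1 ≤ j → η j ≤ η (j + 1))
    (a b : ℕ → ℝ) (ha0 : ∀ j, 0 ≤ a j) (hb0 : ∀ j, 0 ≤ b j)
    (ham : ∀ j, 1 ≤ j → a (j + 1) ≤ a j) (hbm : ∀ j, 1 ≤ j → b (j + 1) ≤ b j)
    (hac : Filter.Tendsto a Filter.atTop (nhds 0))
    (hbc : Filter.Tendsto b Filter.atTop (nhds 0))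
    (hsum : Summable (fun j : ℕ => a (j + 1) * (η (j + 1) - η j)))
    (B : ℝ) (hB : ∀ N, 1 ≤ N → (1 / η N) * ∑ j ∈ Finset.Icc 1 N, b j ≤ B) :
    ∑' j : ℕ, a (j + 1) * b (j + 1) ≤ B * ∑' j : ℕ, a (j + 1) * (η (j + 1) - η j) :=
  stmt_8_general η hη0 hpos a b ha0 hb0 ham hsum B hB
end

section
/- Let X be a Banach space with a biorthogonal system {e_n, e*_n} and η a positive weight. Then ‖∑_{n∈A} ε_n e*_n‖_{X*} ≤ η(|A|) for all finite A and all unimodular signs ε if and only if for every x ∈ X and every N, (1/η(N))·∑_{j=1}^N a_j*(x) ≤ ‖x‖, where (a_j*(x)) is the nonincreasing rearrangement of (|e*_n(x)|). -/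
/-! Testing `∑_{n∈A} ε_n e*_n` against `x` with the phases `ε_n = |e*_n x| / e*_n x` turns its
value into `∑_{n∈A} |e*_n x|`, while for unimodular `ε` the triangle inequality bounds it by the
same sum; so the norms of all signed sums over `A` are bounded by `C` exactly when
`∑_{n∈A} |e*_n x| ≤ C ‖x‖` for every `x`. -/

namespace RCLike

variable {𝕜 : Type*} [RCLike 𝕜]

/-- The value `1` at `z = 0` keeps `phase` unimodular. -/
noncomputable def phase (z : 𝕜) : 𝕜 := if z = 0 then 1 else (‖z‖ : 𝕜) / z

theorem norm_phase (z : 𝕜) : ‖phase z‖ = 1 := by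
  by_cases hz : z = 0
  · simp [phase, hz]
  · simp [phase, hz, norm_div]

theorem phase_mul_self (z : 𝕜) : phase z * z = ‖z‖ := by
  by_cases hz : z = 0
  · simp [phase, hz]
  · rw [phase, if_neg hz, div_mul_cancel₀ _ hz]

end RCLike

section SignedSums

open RCLike

variable {𝕜 : Type*} [RCLike 𝕜] {E : Type*} [NormedAddCommGroup E] [NormedSpace 𝕜 E]
  {ι : Type*}

theorem sum_smul_phase_apply (A : Finset ι) (f : ι → E →L[𝕜] 𝕜) (x : E) :
    (∑ n ∈ A, phase (f n x) • f n) x = ((∑ n ∈ A, ‖f n x‖ : ℝ) : 𝕜) := by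
  simp only [sum_apply, smul_apply, smul_eq_mul,
    phase_mul_self, ofReal_sum]

theorem norm_sum_smul_apply_le (A : Finset ι) (f : ι → E →L[𝕜] 𝕜) {ε : ι → 𝕜}
    (hε : ∀ n, ‖ε n‖ = 1) (x : E) :
    ‖(∑ n ∈ A, ε n • f n) x‖ ≤ ∑ n ∈ A, ‖f n x‖ :=
  calc ‖(∑ n ∈ A, ε n • f n) x‖ = ‖∑ n ∈ A, ε n * f n x‖ := by
        simp only [sum_apply, smul_apply, smul_eq_mul]
    _ ≤ ∑ n ∈ A, ‖ε n * f n x‖ := norm_sum_le _ _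
    _ = ∑ n ∈ A, ‖f n x‖ := by simp only [norm_mul, hε, one_mul]

theorem forall_unimodular_norm_sum_smul_le_iff (A : Finset ι) (f : ι → E →L[𝕜] 𝕜) {C : ℝ}
    (hC : 0 ≤ C) :
    (∀ ε : ι → 𝕜, (∀ n, ‖ε n‖ = 1) → ‖∑ n ∈ A, ε n • f n‖ ≤ C) ↔
      ∀ x, ∑ n ∈ A, ‖f n x‖ ≤ C * ‖x‖ := by
  constructor
  · intro h x
    have hsum : ‖((∑ n ∈ A, ‖f n x‖ : ℝ) : 𝕜)‖ = ∑ n ∈ A, ‖f n x‖ :=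
      norm_of_nonneg (Finset.sum_nonneg fun n _ => norm_nonneg _)
    calc ∑ n ∈ A, ‖f n x‖ = ‖(∑ n ∈ A, phase (f n x) • f n) x‖ := by
          rw [sum_smul_phase_apply, hsum]
      _ ≤ ‖∑ n ∈ A, phase (f n x) • f n‖ * ‖x‖ := ContinuousLinearMap.le_opNorm _ x
      _ ≤ C * ‖x‖ := by
          gcongr
          exact h _ fun n => norm_phase _
  · intro h ε hε
    exact ContinuousLinearMap.opNorm_le_bound _ hC fun x =>
      (norm_sum_smul_apply_le A f hε x).trans (h x)

end SignedSums

theorem stmt_10_general {𝕜 : Type*} [RCLike 𝕜] {X : Type*} [NormedAddCommGroup X]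
    [NormedSpace 𝕜 X]
    (es : ℕ → X →L[𝕜] 𝕜)
    (η : ℕ → ℝ) (hpos : ∀ j, 1 ≤ j → 0 < η j) :
    (∀ A : Finset ℕ, A.Nonempty → ∀ ε : ℕ → 𝕜, (∀ n, ‖ε n‖ = 1) →
        ‖∑ n ∈ A, ε n • es n‖ ≤ η A.card)
      ↔ (∀ x : X, ∀ N, 1 ≤ N → ∀ A : Finset ℕ, A.card = N →
          (1 / η N) * ∑ n ∈ A, ‖es n x‖ ≤ ‖x‖) := by
  constructor
  · rintro h x N hN A rfl
    rw [one_div, inv_mul_le_iff₀ (hpos _ hN)]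
    exact (forall_unimodular_norm_sum_smul_le_iff A es (hpos _ hN).le).1
      (h A (Finset.card_pos.mp hN)) x
  · intro h A hA
    have hN : 1 ≤ A.card := Finset.card_pos.mpr hA
    refine (forall_unimodular_norm_sum_smul_le_iff A es (hpos _ hN).le).2 fun x => ?_
    rw [← inv_mul_le_iff₀ (hpos _ hN), ← one_div]
    exact h x _ hN A rfl

/-- Theorem 1.3: let `{e_n, e*_n}` be a seminormalized complete
biorthogonal system in a Banach space `X` over `𝕜 = ℝ` or `ℂ`, and `η` a positive weight.
Then `‖∑_{n∈A} ε_n e*_n‖ ≤ η |A|` for all finite (nonempty) `A` and unimodular `ε` iff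
for every `x ∈ X` and `N ≥ 1`, `(1/η N)·∑_{j=1}^N a_j*(x) ≤ ‖x‖`; since
`∑_{j=1}^N a_j*(x) = sup_{|A| = N} ∑_{n∈A} |e*_n x|`, the latter is rendered as:
for every set `A` with `|A| = N`, `(1/η N)·∑_{n∈A} ‖e*_n x‖ ≤ ‖x‖`. -/
theorem stmt_10 {𝕜 : Type*} [RCLike 𝕜] {X : Type*} [NormedAddCommGroup X]
    [NormedSpace 𝕜 X] [CompleteSpace X]
    (e : ℕ → X) (es : ℕ → X →L[𝕜] 𝕜)
    (hbi : ∀ n m, es n (e m) = if n = m then 1 else 0)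
    (hsemi : ∃ c₁ c₂ : ℝ, 0 < c₁ ∧
      ∀ n, c₁ ≤ ‖e n‖ ∧ ‖e n‖ ≤ c₂ ∧ c₁ ≤ ‖es n‖ ∧ ‖es n‖ ≤ c₂)
    (hcomplete : (Submodule.span 𝕜 (Set.range e)).topologicalClosure = ⊤)
    (η : ℕ → ℝ) (hpos : ∀ j, 1 ≤ j → 0 < η j) :
    (∀ A : Finset ℕ, A.Nonempty → ∀ ε : ℕ → 𝕜, (∀ n, ‖ε n‖ = 1) →
        ‖∑ n ∈ A, ε n • es n‖ ≤ η A.card)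
      ↔ (∀ x : X, ∀ N, 1 ≤ N → ∀ A : Finset ℕ, A.card = N →
          (1 / η N) * ∑ n ∈ A, ‖es n x‖ ≤ ‖x‖) :=
  stmt_10_general es η hpos
end

section
/- In the space KT(p, r) (1 < p < ∞, 1 ≤ r ≤ ∞) of sequences x ∈ c₀ with norm ‖x‖ = max{‖x‖_{ℓ^{p,r}}, sup_N |∑_{n=1}^N x_n/n^{1/p'}|}, the canonical basis satisfies: for every finite A with |A| = N and signs ε, c_{p,r}·N^{1/p} ≤ ‖∑_{n∈A} ε_n e_n‖ ≤ p·N^{1/p} for some constant c_{p,r} > 0 independent of N. -/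
/-!
The nonincreasing rearrangement of `|1_{εA}|` is `1_{[1,N]}`, so the `ℓ^{p,r}` part of the norm
is `(∑_{j ≤ N} j^{r/p - 1})^{1/r}`, and `∑_{j ≤ N} j^{a-1}` is comparable to `N^a`: from above
by telescoping `a j^{a-1} ≤ j^a - (j-1)^a` (Bernoulli, `a ≤ 1`) or by `j ≤ N` (`a ≥ 1`), from
below by the terms with `N/2 < j ≤ N`. Every partial sum of `∑ ε_n n^{-1/p'}` over `A` is at most
`∑_{n ∈ A} n^{1/p-1} ≤ ∑_{j ≤ N} j^{1/p-1} ≤ p N^{1/p}`, because a decreasing function summed over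
`N` positive integers is largest on `[1,N]`.
-/

open Finset Real

section PowerSums

variable {a : ℝ}

lemma mul_rpow_sub_one_le_rpow_sub_rpow (ha : 0 ≤ a) (ha1 : a ≤ 1) {x : ℝ} (hx : 1 ≤ x) :
    a * x ^ (a - 1) ≤ x ^ a - (x - 1) ^ a := by
  have hx0 : 0 < x := by linarith
  have hinv : x⁻¹ ≤ 1 := inv_le_one_of_one_le₀ hx
  have hbern : (1 - x⁻¹) ^ a ≤ 1 - a * x⁻¹ := by
    simpa [sub_eq_add_neg] using rpow_one_add_le_one_add_mul_self (s := -x⁻¹) (by linarith) ha ha1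
  have hfac : (x - 1) ^ a = x ^ a * (1 - x⁻¹) ^ a := by
    rw [← mul_rpow hx0.le (by linarith), mul_sub, mul_one, mul_inv_cancel₀ hx0.ne']
  rw [hfac, rpow_sub_one hx0.ne']
  have hxa : 0 ≤ x ^ a := rpow_nonneg hx0.le a
  nlinarith [mul_le_mul_of_nonneg_left hbern hxa, div_eq_mul_inv (x ^ a) x]

lemma sum_Icc_rpow_sub_rpow_sub_one (ha : a ≠ 0) (N : ℕ) :
    ∑ j ∈ Icc 1 N, ((j : ℝ) ^ a - ((j : ℝ) - 1) ^ a) = (N : ℝ) ^ a := by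
  induction N with
  | zero => simp [zero_rpow ha]
  | succ n ih =>
    rw [sum_Icc_succ_top (by omega), ih]
    push_cast
    rw [add_sub_cancel_right, add_sub_cancel]

lemma sum_Icc_rpow_sub_one_le_div (ha : 0 < a) (ha1 : a ≤ 1) (N : ℕ) :
    ∑ j ∈ Icc 1 N, (j : ℝ) ^ (a - 1) ≤ (N : ℝ) ^ a / a := by
  rw [le_div_iff₀ ha, sum_mul, ← sum_Icc_rpow_sub_rpow_sub_one ha.ne' N]
  refine sum_le_sum fun j hj => ?_
  rw [mul_comm]
  exact mul_rpow_sub_one_le_rpow_sub_rpow ha.le ha1 (by exact_mod_cast (mem_Icc.mp hj).1)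

lemma sum_Icc_rpow_sub_one_le_rpow (ha : 1 ≤ a) (N : ℕ) :
    ∑ j ∈ Icc 1 N, (j : ℝ) ^ (a - 1) ≤ (N : ℝ) ^ a := by
  rcases N.eq_zero_or_pos with rfl | hN
  · simp [zero_rpow (show a ≠ 0 by linarith)]
  calc ∑ j ∈ Icc 1 N, (j : ℝ) ^ (a - 1)
      ≤ ∑ _j ∈ Icc 1 N, (N : ℝ) ^ (a - 1) :=
        sum_le_sum fun j hj => rpow_le_rpow (Nat.cast_nonneg j)
          (by exact_mod_cast (mem_Icc.mp hj).2) (by linarith)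
    _ = (N : ℝ) ^ a := by
        rw [sum_const, Nat.card_Icc, nsmul_eq_mul, rpow_sub_one (by positivity)]
        field_simp
        simp

lemma half_mul_half_rpow_le_sum_Icc_rpow_sub_one (ha : 0 ≤ a) {N : ℕ} (hN : 0 < N) :
    (1 / 2) * ((N : ℝ) / 2) ^ a ≤ ∑ j ∈ Icc 1 N, (j : ℝ) ^ (a - 1) := by
  have hterm : ∀ j ∈ Ioc (N / 2) N, ((N : ℝ) / 2) ^ a / N ≤ (j : ℝ) ^ (a - 1) := by
    intro j hj
    obtain ⟨hj1, hjN⟩ := mem_Ioc.mp hj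
    have hj0 : (0 : ℝ) < j := by exact_mod_cast (show 0 < j by omega)
    have hhalf : (N : ℝ) / 2 ≤ j := by
      rw [div_le_iff₀ two_pos]; exact_mod_cast (show N ≤ j * 2 by omega)
    rw [rpow_sub_one hj0.ne']
    exact div_le_div₀ (by positivity) (rpow_le_rpow (by positivity) hhalf ha) hj0
      (by exact_mod_cast hjN)
  have hcard : (N : ℝ) / 2 ≤ #(Ioc (N / 2) N) := by
    rw [Nat.card_Ioc, div_le_iff₀ two_pos]; exact_mod_cast (show N ≤ (N - N / 2) * 2 by omega)
  calc (1 / 2) * ((N : ℝ) / 2) ^ a = ((N : ℝ) / 2) * (((N : ℝ) / 2) ^ a / N) := by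
        field_simp
    _ ≤ #(Ioc (N / 2) N) * (((N : ℝ) / 2) ^ a / N) := by gcongr
    _ ≤ ∑ j ∈ Ioc (N / 2) N, (j : ℝ) ^ (a - 1) := by
        rw [← nsmul_eq_mul]; exact card_nsmul_le_sum _ _ _ hterm
    _ ≤ ∑ j ∈ Icc 1 N, (j : ℝ) ^ (a - 1) :=
        sum_le_sum_of_subset_of_nonneg
          (fun j hj => mem_Icc.mpr ⟨by have := (mem_Ioc.mp hj).1; omega, (mem_Ioc.mp hj).2⟩)
          fun j _ _ => by positivity

end PowerSums

lemma sum_le_sum_Icc_card_of_antitoneOn {f : ℕ → ℝ} (hf : AntitoneOn f (Set.Ici 1))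
    (A : Finset ℕ) (hA : ∀ n ∈ A, 1 ≤ n) : ∑ n ∈ A, f n ≤ ∑ j ∈ Icc 1 #A, f j := by
  induction A using Finset.induction_on_max with
  | empty => simp
  | insert m A hlt ih =>
    have hmA : m ∉ A := fun h => lt_irrefl m (hlt m h)
    have hAm : A ⊆ Ico 1 m := fun n hn =>
      mem_Ico.mpr ⟨hA n (mem_insert_of_mem hn), hlt n hn⟩
    have hcard : #A + 1 ≤ m := by
      have := card_le_card hAm; rw [Nat.card_Ico] at this; have := hA m (mem_insert_self m A); omega
    rw [sum_insert hmA, card_insert_of_notMem hmA, sum_Icc_succ_top (by omega), add_comm]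
    exact add_le_add (ih fun n hn => hA n (mem_insert_of_mem hn))
      (hf (Set.mem_Ici.mpr (by omega)) (Set.mem_Ici.mpr (hA m (mem_insert_self m A))) hcard)

lemma abs_sum_Icc_indicator_div_rpow_le {p : ℝ} (hp : 1 ≤ p) (A : Finset ℕ)
    (hA : ∀ n ∈ A, 1 ≤ n) (ε : ℕ → ℝ) (hε : ∀ n, |ε n| ≤ 1) (M : ℕ) :
    |∑ n ∈ Icc 1 M, (if n ∈ A then ε n else 0) / (n : ℝ) ^ (1 - 1 / p)|
      ≤ p * (#A : ℝ) ^ (1 / p) := by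
  have hp0 : 0 < p := by linarith
  have hterm : ∀ n ∈ Icc 1 M, |(if n ∈ A then ε n else 0) / (n : ℝ) ^ (1 - 1 / p)|
      ≤ if n ∈ A then (n : ℝ) ^ (1 / p - 1) else 0 := by
    intro n hn
    have hn0 : (0 : ℝ) < n := by exact_mod_cast (mem_Icc.mp hn).1
    split_ifs
    · rw [abs_div, abs_of_pos (rpow_pos_of_pos hn0 _), div_eq_mul_inv, ← rpow_neg hn0.le,
        neg_sub]
      exact mul_le_of_le_one_left (by positivity) (hε n)
    · simp
  have hanti : AntitoneOn (fun n : ℕ => (n : ℝ) ^ (1 / p - 1)) (Set.Ici 1) :=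
    fun m hm n _ hmn => rpow_le_rpow_of_nonpos (by exact_mod_cast hm)
      (by exact_mod_cast hmn) (by rw [sub_nonpos, div_le_one hp0]; exact hp)
  calc |∑ n ∈ Icc 1 M, (if n ∈ A then ε n else 0) / (n : ℝ) ^ (1 - 1 / p)|
      ≤ ∑ n ∈ Icc 1 M, if n ∈ A then (n : ℝ) ^ (1 / p - 1) else 0 :=
        (abs_sum_le_sum_abs _ _).trans (sum_le_sum hterm)
    _ = ∑ n ∈ Icc 1 M ∩ A, (n : ℝ) ^ (1 / p - 1) := sum_ite_mem _ _ _
    _ ≤ ∑ n ∈ A, (n : ℝ) ^ (1 / p - 1) :=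
        sum_le_sum_of_subset_of_nonneg inter_subset_right fun n _ _ => by positivity
    _ ≤ ∑ j ∈ Icc 1 #A, (j : ℝ) ^ (1 / p - 1) := sum_le_sum_Icc_card_of_antitoneOn hanti A hA
    _ ≤ (#A : ℝ) ^ (1 / p) / (1 / p) :=
        sum_Icc_rpow_sub_one_le_div (by positivity) (by rw [div_le_one hp0]; exact hp) _
    _ = p * (#A : ℝ) ^ (1 / p) := by field_simp

section Lorentz

variable {p : ℝ} {N : ℕ}

/-- The `ℓ^{p,r}` norm of `1_{[1,N]}`, the nonincreasing rearrangement of `|1_{εA}|` for any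
`A ⊆ {1,2,…}` with `|A| = N`. -/
noncomputable def lorentzIndicatorNorm (p : ℝ) (r : ENNReal) (N : ℕ) : ℝ :=
  if r = ⊤ then
    ⨆ j : ℕ, (j : ℝ) ^ (1 / p) * (if j ∈ Finset.Icc 1 N then (1 : ℝ) else 0)
  else
    (∑' j : ℕ, ((j : ℝ) ^ (1 / p) *
      (if j ∈ Finset.Icc 1 N then (1 : ℝ) else 0)) ^ r.toReal / j) ^ (1 / r.toReal)

lemma iSup_rpow_mul_indicator_Icc {b : ℝ} (hb : 0 ≤ b) (hN : 1 ≤ N) :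
    ⨆ j : ℕ, (j : ℝ) ^ b * (if j ∈ Icc 1 N then (1 : ℝ) else 0) = (N : ℝ) ^ b := by
  have hle : ∀ j : ℕ, (j : ℝ) ^ b * (if j ∈ Icc 1 N then (1 : ℝ) else 0) ≤ (N : ℝ) ^ b := by
    intro j
    split_ifs with hj
    · rw [mul_one]
      exact rpow_le_rpow (Nat.cast_nonneg j) (by exact_mod_cast (mem_Icc.mp hj).2) hb
    · rw [mul_zero]; positivity
  refine le_antisymm (ciSup_le hle) ?_
  refine le_ciSup_of_le ⟨_, Set.forall_mem_range.mpr hle⟩ N ?_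
  rw [if_pos (mem_Icc.mpr ⟨hN, le_rfl⟩), mul_one]

lemma tsum_rpow_mul_indicator_Icc_rpow_div {b t : ℝ} (ht : t ≠ 0) (N : ℕ) :
    ∑' j : ℕ, ((j : ℝ) ^ b * (if j ∈ Icc 1 N then (1 : ℝ) else 0)) ^ t / j
      = ∑ j ∈ Icc 1 N, (j : ℝ) ^ (b * t - 1) := by
  rw [tsum_eq_sum (s := Icc 1 N) fun j hj => by simp [hj, zero_rpow ht]]
  refine sum_congr rfl fun j hj => ?_
  have hj0 : (0 : ℝ) < j := by exact_mod_cast (mem_Icc.mp hj).1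
  rw [if_pos hj, mul_one, ← rpow_mul hj0.le, rpow_sub_one hj0.ne']

lemma lorentzIndicatorNorm_le {r : ENNReal} (hp : 1 < p) (hr : 1 ≤ r) (hN : 1 ≤ N) :
    lorentzIndicatorNorm p r N ≤ p * (N : ℝ) ^ (1 / p) := by
  have hp0 : 0 < p := by linarith
  have hNp : (0 : ℝ) ≤ (N : ℝ) ^ (1 / p) := by positivity
  unfold lorentzIndicatorNorm
  split_ifs with hrtop
  · rw [iSup_rpow_mul_indicator_Icc (by positivity) hN]
    exact le_mul_of_one_le_left hNp hp.le
  set t := r.toReal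
  have ht : 1 ≤ t := by simpa using ENNReal.toReal_mono hrtop hr
  have ht0 : 0 < t := by linarith
  set a := 1 / p * t
  have ha : 0 < a := by positivity
  have hsum : ∑ j ∈ Icc 1 N, (j : ℝ) ^ (a - 1) ≤ p * (N : ℝ) ^ a := by
    rcases le_total a 1 with ha1 | ha1
    · have hinv : a⁻¹ ≤ p := by
        simp only [a, one_div, mul_inv, inv_inv]
        exact mul_le_of_le_one_right hp0.le (inv_le_one_of_one_le₀ ht)
      refine (sum_Icc_rpow_sub_one_le_div ha ha1 N).trans ?_
      rw [div_eq_inv_mul]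
      gcongr
    · exact (sum_Icc_rpow_sub_one_le_rpow ha1 N).trans
        (le_mul_of_one_le_left (by positivity) hp.le)
  rw [tsum_rpow_mul_indicator_Icc_rpow_div ht0.ne']
  calc (∑ j ∈ Icc 1 N, (j : ℝ) ^ (a - 1)) ^ (1 / t)
      ≤ (p * (N : ℝ) ^ a) ^ (1 / t) := rpow_le_rpow (by positivity) hsum (by positivity)
    _ = p ^ (1 / t) * (N : ℝ) ^ (1 / p) := by
        rw [mul_rpow hp0.le (by positivity), ← rpow_mul (by positivity)]
        congr 2
        simp only [a]
        field_simp
    _ ≤ p * (N : ℝ) ^ (1 / p) := by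
        gcongr
        exact rpow_le_self_of_one_le hp.le (by rw [div_le_one ht0]; exact ht)

lemma quarter_mul_rpow_le_lorentzIndicatorNorm {r : ENNReal} (hp : 1 ≤ p) (hr : 1 ≤ r)
    (hN : 1 ≤ N) : 1 / 4 * (N : ℝ) ^ (1 / p) ≤ lorentzIndicatorNorm p r N := by
  have hp0 : 0 < p := by linarith
  have hNp : (0 : ℝ) ≤ (N : ℝ) ^ (1 / p) := by positivity
  unfold lorentzIndicatorNorm
  split_ifs with hrtop
  · rw [iSup_rpow_mul_indicator_Icc (by positivity) hN]
    linarith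
  set t := r.toReal
  have ht : 1 ≤ t := by simpa using ENNReal.toReal_mono hrtop hr
  have ht0 : 0 < t := by linarith
  have hN2 : (0 : ℝ) ≤ (N : ℝ) / 2 := by positivity
  rw [tsum_rpow_mul_indicator_Icc_rpow_div ht0.ne']
  calc 1 / 4 * (N : ℝ) ^ (1 / p)
      = 1 / 2 * ((N : ℝ) ^ (1 / p) / 2) := by ring
    _ ≤ (1 / 2) ^ (1 / t) * ((N : ℝ) / 2) ^ (1 / p) := by
        rw [div_rpow (Nat.cast_nonneg N) zero_le_two]
        gcongr
        · exact self_le_rpow_of_le_one (by norm_num) (by norm_num)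
            (by rw [div_le_one ht0]; exact ht)
        · exact rpow_le_self_of_one_le one_le_two (by rw [div_le_one hp0]; exact hp)
    _ = (1 / 2 * ((N : ℝ) / 2) ^ (1 / p * t)) ^ (1 / t) := by
        rw [mul_rpow (by norm_num) (by positivity), ← rpow_mul hN2]
        field_simp
    _ ≤ (∑ j ∈ Icc 1 N, (j : ℝ) ^ (1 / p * t - 1)) ^ (1 / t) :=
        rpow_le_rpow (by positivity)
          (half_mul_half_rpow_le_sum_Icc_rpow_sub_one (by positivity) hN) (by positivity)

end Lorentz

/-- Lemma 8.8, democracy functions of the canonical basis of `KT(p,r)`: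
in the Konyagin–Temlyakov space `KT(p,r)` (`1 < p < ∞`, `1 ≤ r ≤ ∞`), whose norm is
`‖x‖ = max{ ‖x‖_{ℓ^{p,r}}, sup_M |∑_{n=1}^M x_n / n^{1/p'}| }`, there is a constant
`c = c_{p,r} > 0` such that for every finite `A ⊆ {1,2,…}` with `|A| = N ≥ 1` and signs
`ε` of modulus one: `c·N^{1/p} ≤ ‖1_{εA}‖ ≤ p·N^{1/p}`. Here `x = 1_{εA}` has
`x n = ε n` for `n ∈ A`, `0` otherwise, and `|x|` has nonincreasing rearrangement
`x* = 1_{[1,N]}`, so `‖x‖_{ℓ^{p,r}} = (∑'_j (j^{1/p}·x*_j)^r / j)^{1/r}`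
(for `r = ∞`, `sup_j j^{1/p}·x*_j`); also `1/p' = 1 − 1/p`. -/
theorem stmt_19 (p : ℝ) (hp : 1 < p) (r : ENNReal) (hr : 1 ≤ r) :
    ∃ c : ℝ, 0 < c ∧ ∀ N : ℕ, 1 ≤ N → ∀ A : Finset ℕ, (∀ n ∈ A, 1 ≤ n) → A.card = N →
      ∀ ε : ℕ → ℝ, (∀ n, |ε n| = 1) →
      c * (N : ℝ) ^ (1 / p) ≤
          max
            (if r = ⊤ then
              ⨆ j : ℕ, (j : ℝ) ^ (1 / p) * (if j ∈ Finset.Icc 1 N then (1 : ℝ) else 0)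
            else
              (∑' j : ℕ, ((j : ℝ) ^ (1 / p) *
                (if j ∈ Finset.Icc 1 N then (1 : ℝ) else 0)) ^ r.toReal / j) ^ (1 / r.toReal))
            (⨆ M : ℕ, |∑ n ∈ Finset.Icc 1 M,
              (if n ∈ A then ε n else 0) / (n : ℝ) ^ (1 - 1 / p)|) ∧
        max
            (if r = ⊤ then
              ⨆ j : ℕ, (j : ℝ) ^ (1 / p) * (if j ∈ Finset.Icc 1 N then (1 : ℝ) else 0)
            else
              (∑' j : ℕ, ((j : ℝ) ^ (1 / p) *
                (if j ∈ Finset.Icc 1 N then (1 : ℝ) else 0)) ^ r.toReal / j) ^ (1 / r.toReal))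
            (⨆ M : ℕ, |∑ n ∈ Finset.Icc 1 M,
              (if n ∈ A then ε n else 0) / (n : ℝ) ^ (1 - 1 / p)|) ≤
          p * (N : ℝ) ^ (1 / p) := by
  refine ⟨1 / 4, by norm_num, fun N hN A hA hcard ε hε => ⟨?_, ?_⟩⟩
  · exact le_max_of_le_left (quarter_mul_rpow_le_lorentzIndicatorNorm hp.le hr hN)
  · refine max_le (lorentzIndicatorNorm_le hp hr hN) (ciSup_le fun M => ?_)
    rw [← hcard]
    exact abs_sum_Icc_indicator_div_rpow_le hp.le A hA ε (fun n => (hε n).le) M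
end
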